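/- arXiv:1909.10962 — 3 statements merged into one kernel-verified Lean document; each statement's English description precedes it below -/
import Mathlib

section
/- Let G be a group, y ∈ G, and k > 1 an integer. Suppose v, w ∈ G commute (v * w = w * v), the centralizer of y equals the subgroup generated by {v, w}, and the map ℤ × ℤ → G sending (r, s) to v^r * w^s is injective. Suppose y = v^c * w^d for integers c, d, and assume that any two k-th roots of y in G are conjugate in G. Then: (1) there exists a ∈ G with a^k = y if and only if k divides c and k divides d; and (2) if k divides c and k divides d, then a = v^(c/k) * w^(d/k) is the unique element of G satisfying a^k = y. -/
/-! If `a ^ k = y`, then `a` commutes with `y`, so `a` lies in the centralizer of `y`, which is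
generated by the commuting pair `v, w`; hence `a = v ^ r * w ^ s`. Comparing
`a ^ k = v ^ (r * k) * w ^ (s * k)` with `y = v ^ c * w ^ d` through the injectivity of
`(r, s) ↦ v ^ r * w ^ s` gives `c = r * k` and `d = s * k`, which yields both divisibility and
uniqueness of the root. -/

namespace Commute

variable {G : Type*} [Group G] {v w : G}

theorem zpow_mul_zpow_zpow (h : Commute v w) (r s k : ℤ) :
    (v ^ r * w ^ s) ^ k = v ^ (r * k) * w ^ (s * k) := by
  rw [(h.zpow_zpow r s).mul_zpow, zpow_mul, zpow_mul]

theorem exists_zpow_mul_zpow_eq_of_mem_closure_pair (h : Commute v w) {x : G}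
    (hx : x ∈ Subgroup.closure {v, w}) : ∃ r s : ℤ, v ^ r * w ^ s = x := by
  let f := (zpowersHom G v).noncommCoprod (zpowersHom G w) fun m n => h.zpow_zpow m.toAdd n.toAdd
  have hle : Subgroup.closure {v, w} ≤ f.range := by
    rw [Subgroup.closure_le, Set.insert_subset_iff, Set.singleton_subset_iff]
    exact ⟨⟨(Multiplicative.ofAdd 1, 1), show v ^ (1 : ℤ) * w ^ (0 : ℤ) = v by simp⟩,
      ⟨(1, Multiplicative.ofAdd 1), show v ^ (0 : ℤ) * w ^ (1 : ℤ) = w by simp⟩⟩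
  obtain ⟨⟨r, s⟩, rfl⟩ := hle hx
  exact ⟨r.toAdd, s.toAdd, rfl⟩

theorem exists_zpow_mul_zpow_eq_of_zpow_eq (h : Commute v w) {y a : G} {k c d : ℤ}
    (hcent : Subgroup.centralizer {y} ≤ Subgroup.closure {v, w})
    (hinj : Function.Injective fun p : ℤ × ℤ => v ^ p.1 * w ^ p.2)
    (hy : y = v ^ c * w ^ d) (ha : a ^ k = y) :
    ∃ r s : ℤ, v ^ r * w ^ s = a ∧ r * k = c ∧ s * k = d := by
  have ha_cent : a ∈ Subgroup.centralizer {y} :=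
    Subgroup.mem_centralizer_singleton_iff.mpr (ha ▸ (Commute.self_zpow a k).eq)
  obtain ⟨r, s, rfl⟩ := h.exists_zpow_mul_zpow_eq_of_mem_closure_pair (hcent ha_cent)
  have hexp : (r * k, s * k) = (c, d) := hinj <| by
    dsimp only
    rw [← h.zpow_mul_zpow_zpow, ha, hy]
  obtain ⟨hr, hs⟩ := Prod.mk.inj hexp
  exact ⟨r, s, rfl, hr, hs⟩

end Commute

theorem kth_root_iff_divides_general {G : Type*} [Group G] (y v w : G) (k : ℤ) (hk : 1 < k)
    (hvw : v * w = w * v)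
    (hcent : Subgroup.centralizer ({y} : Set G) = Subgroup.closure {v, w})
    (hinj : Function.Injective (fun p : ℤ × ℤ => v ^ p.1 * w ^ p.2))
    (c d : ℤ) (hy : y = v ^ c * w ^ d) :
    ((∃ a : G, a ^ k = y) ↔ (k ∣ c ∧ k ∣ d)) ∧
    (k ∣ c → k ∣ d →
      (v ^ (c / k) * w ^ (d / k)) ^ k = y ∧
      ∀ a : G, a ^ k = y → a = v ^ (c / k) * w ^ (d / k)) := by
  have hc : Commute v w := hvw
  have hk0 : k ≠ 0 := by omega
  have root_of_dvd (hkc : k ∣ c) (hkd : k ∣ d) : (v ^ (c / k) * w ^ (d / k)) ^ k = y := by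
    rw [hc.zpow_mul_zpow_zpow, Int.ediv_mul_cancel hkc, Int.ediv_mul_cancel hkd, hy]
  have root_form {a : G} (ha : a ^ k = y) :=
    hc.exists_zpow_mul_zpow_eq_of_zpow_eq hcent.le hinj hy ha
  refine ⟨⟨fun ⟨a, ha⟩ => ?_, fun ⟨hkc, hkd⟩ => ⟨_, root_of_dvd hkc hkd⟩⟩,
    fun hkc hkd => ⟨root_of_dvd hkc hkd, fun a ha => ?_⟩⟩
  · obtain ⟨r, s, -, rfl, rfl⟩ := root_form ha
    exact ⟨dvd_mul_left k r, dvd_mul_left k s⟩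
  · obtain ⟨r, s, rfl, rfl, rfl⟩ := root_form ha
    rw [Int.mul_ediv_cancel r hk0, Int.mul_ediv_cancel s hk0]

/-- If the centralizer of `y` is free abelian of rank 2 with basis `v, w`,
`y = v^c * w^d`, and any two `k`-th roots of `y` are conjugate, then `y` has a
`k`-th root iff `k ∣ c` and `k ∣ d`, in which case `v^(c/k) * w^(d/k)` is the
unique `k`-th root of `y`. -/
theorem kth_root_iff_divides {G : Type*} [Group G] (y v w : G) (k : ℤ) (hk : 1 < k)
    (hvw : v * w = w * v)
    (hcent : Subgroup.centralizer ({y} : Set G) = Subgroup.closure {v, w})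
    (hinj : Function.Injective (fun p : ℤ × ℤ => v ^ p.1 * w ^ p.2))
    (c d : ℤ) (hy : y = v ^ c * w ^ d)
    (hconj : ∀ a b : G, a ^ k = y → b ^ k = y → ∃ u : G, b = u⁻¹ * a * u) :
    ((∃ a : G, a ^ k = y) ↔ (k ∣ c ∧ k ∣ d)) ∧
    (k ∣ c → k ∣ d →
      (v ^ (c / k) * w ^ (d / k)) ^ k = y ∧
      ∀ a : G, a ^ k = y → a = v ^ (c / k) * w ^ (d / k)) :=
  kth_root_iff_divides_general y v w k hk hvw hcent hinj c d hy
end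

section
/- Let X be a type, f : X → X and τ : X → X functions such that τ ∘ τ = id and f ∘ τ = τ ∘ f. Let y ∈ X be a periodic point of f (f^[t](y) = y for some t > 0). Suppose τ(y) ≠ y and let m > 0 be minimal such that f^[m](y) = τ(y). Then the minimal period of y under f equals 2 * m. -/
/-!
Since `f^[m]` commutes with `τ`, it maps `τ y` back to `τ (τ y) = y`, so `2 * m` is a period of `y`.
Reducing `m` modulo the minimal period gives another positive return time to `τ y`, so minimality
of `m` forces `m` to be smaller than the minimal period; the only divisor of `2 * m` exceeding `m`
is `2 * m` itself.
-/

namespace Function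

variable {α : Type*} {f : α → α} {x : α} {m : ℕ}

theorem lt_minimalPeriod_of_iterate_eq_of_ne {z : α} (hx : x ∈ periodicPts f) (hz : z ≠ x)
    (hm : f^[m] x = z) (hmin : ∀ j, 0 < j → f^[j] x = z → m ≤ j) :
    m < minimalPeriod f x := by
  have hmod : f^[m % minimalPeriod f x] x = z := by rw [iterate_mod_minimalPeriod_eq, hm]
  have hmod_pos : 0 < m % minimalPeriod f x :=
    Nat.pos_of_ne_zero fun h => hz (by rw [← hmod, h, iterate_zero_apply])
  exact (hmin _ hmod_pos hmod).trans_lt (Nat.mod_lt _ (minimalPeriod_pos_of_mem_periodicPts hx))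

theorem Commute.isPeriodicPt_two_mul_of_iterate_eq {τ : α → α} (hcomm : Function.Commute f τ)
    (hτ : Involutive τ) (hm : f^[m] x = τ x) : IsPeriodicPt f (2 * m) x := by
  rw [IsPeriodicPt, IsFixedPt, two_mul, iterate_add_apply, hm, (hcomm.iterate_left m).eq, hm, hτ]

end Function

theorem minimalPeriod_eq_two_mul_general {X : Type*} (f τ : X → X)
    (hτ : τ ∘ τ = id) (hcomm : f ∘ τ = τ ∘ f)
    (y : X)
    (hτy : τ y ≠ y)
    (m : ℕ) (hmy : f^[m] y = τ y)
    (hmin : ∀ j : ℕ, 0 < j → f^[j] y = τ y → m ≤ j) :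
    Function.minimalPeriod f y = 2 * m := by
  have hm : m ≠ 0 := by
    rintro rfl
    exact hτy hmy.symm
  have hcomm' : Function.Commute f τ := fun x => congrFun hcomm x
  have hper : Function.IsPeriodicPt f (2 * m) y :=
    hcomm'.isPeriodicPt_two_mul_of_iterate_eq (fun x => congrFun hτ x) hmy
  have hlt : m < Function.minimalPeriod f y :=
    Function.lt_minimalPeriod_of_iterate_eq_of_ne
      (Function.mk_mem_periodicPts (by omega) hper) hτy hmy hmin
  exact (Nat.eq_of_dvd_of_lt_two_mul (by omega) hper.minimalPeriod_dvd (by omega)).symm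

/-- If `τ` is an involution commuting with `f`, `y` is a periodic point of `f`
with `τ y ≠ y`, and `m > 0` is minimal with `f^[m] y = τ y`, then the minimal
period of `y` under `f` is `2 * m`. -/
theorem minimalPeriod_eq_two_mul {X : Type*} (f τ : X → X)
    (hτ : τ ∘ τ = id) (hcomm : f ∘ τ = τ ∘ f)
    (y : X) (t : ℕ) (ht : 0 < t) (hper : f^[t] y = y)
    (hτy : τ y ≠ y)
    (m : ℕ) (hm : 0 < m) (hmy : f^[m] y = τ y)
    (hmin : ∀ j : ℕ, 0 < j → f^[j] y = τ y → m ≤ j) :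
    Function.minimalPeriod f y = 2 * m :=
  minimalPeriod_eq_two_mul_general f τ hτ hcomm y hτy m hmy hmin
end

section
/- Let G be a group and Δ, q ∈ G elements such that Δ² commutes with q (Δ² * q = q * Δ²). Then for every integer c and every natural number r, Δ^(2c − 1) * (q * Δ⁻¹ * q * Δ)^r * q = (Δ²)^(c + r) * (Δ⁻¹ * q)^(2r + 1). -/
/-! Write `z = Δ²` and `a = Δ⁻¹ * q`, so that `z` commutes with `a`. Splitting off `Δ^(2c)` and
conjugating by `Δ`, the word `Δ⁻¹ * (q * Δ⁻¹ * q * Δ)^r * q` becomes `(a² * z)^r * a`, which is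
`z^r * a^(2r+1)` because `z` commutes with `a`. -/

theorem Commute.mul_pow_mul_self {M : Type*} [Monoid M] {z a : M} (h : Commute z a) (k r : ℕ) :
    (a ^ k * z) ^ r * a = z ^ r * a ^ (k * r + 1) := by
  rw [(h.pow_right k).symm.mul_pow, ← pow_mul, pow_succ, mul_assoc, ← mul_assoc _ (z ^ r),
    ← ((h.pow_right _).pow_left r).eq, mul_assoc]

theorem inv_mul_pow_mul {G : Type*} [Group G] (g x : G) (n : ℕ) (y : G) :
    g⁻¹ * x ^ n * y = (g⁻¹ * x * g) ^ n * (g⁻¹ * y) := by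
  have hconj : (g⁻¹ * x * g) ^ n = g⁻¹ * x ^ n * g := by simpa using conj_pow (a := g⁻¹)
  rw [hconj]
  group

/-- If `Δ²` commutes with `q`, then
`Δ^(2c - 1) * (q * Δ⁻¹ * q * Δ)^r * q = (Δ²)^(c + r) * (Δ⁻¹ * q)^(2r + 1)`. -/
theorem odd_infimum_identity {G : Type*} [Group G] (Δ q : G)
    (h : Δ ^ 2 * q = q * Δ ^ 2) (c : ℤ) (r : ℕ) :
    Δ ^ (2 * c - 1) * (q * Δ⁻¹ * q * Δ) ^ r * q =
      (Δ ^ 2) ^ (c + (r : ℤ)) * (Δ⁻¹ * q) ^ (2 * r + 1) := by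
  have hcomm : Commute (Δ ^ 2) (Δ⁻¹ * q) :=
    ((Commute.refl Δ).pow_left 2).inv_right.mul_right h
  have hconj : Δ⁻¹ * (q * Δ⁻¹ * q * Δ) * Δ = (Δ⁻¹ * q) ^ 2 * Δ ^ 2 := by
    rw [sq, sq]; group
  calc Δ ^ (2 * c - 1) * (q * Δ⁻¹ * q * Δ) ^ r * q
      = (Δ ^ 2) ^ c * (Δ⁻¹ * (q * Δ⁻¹ * q * Δ) ^ r * q) := by group
    _ = (Δ ^ 2) ^ c * (((Δ⁻¹ * q) ^ 2 * Δ ^ 2) ^ r * (Δ⁻¹ * q)) := by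
      rw [inv_mul_pow_mul, hconj]
    _ = (Δ ^ 2) ^ (c + (r : ℤ)) * (Δ⁻¹ * q) ^ (2 * r + 1) := by
      rw [hcomm.mul_pow_mul_self, zpow_add, zpow_natCast, mul_assoc]
end
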